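/- Let V_n = max{Z₁,…,Z_n} be the maximum of n i.i.d. standard Gaussians and let b_n = √(2 log n) − log(4π log n)/√(8 log n). For every θ > 0 there is a constant γ(θ) > 0 such that E[exp(−θ max{V_n, 0}²)] ≤ γ(θ) exp(−θ b_n²) for all n ≥ 1. -/

import Mathlib

open MeasureTheory ProbabilityTheory Real

/-- The centering constant `b_n = √(2 log n) − log(4π log n)/√(8 log n)`. -/
noncomputable def bConst (n : ℕ) : ℝ :=
  Real.sqrt (2 * Real.log n)
    - Real.log (4 * Real.pi * Real.log n) / Real.sqrt (8 * Real.log n)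

/-!
Let `φ`, `Φ`, `Ψ = 1 - Φ` be the standard Gaussian density, distribution function and tail, and
write `b = b_n`, `t_k = b - k / b`, `V⁺ = max V_n 0`. On the event `V⁺ < b`, `⌊b (b - V⁺)⌋ = k`
one has `V_n ≤ t_k` and `exp (-θ V⁺²) ≤ e^{-θ b²} e^{2θ(k+1)}`, so the moment is at most
`e^{-θ b²} (1 + ∑_{k ≤ b²} e^{2θ(k+1)} Φ(t_k)ⁿ)`. Now `Φⁿ ≤ exp (-n Ψ)`, the Mills-type bound
`Ψ(t) ≥ e^{-3/2} φ(t) / (1 + t)` and `φ(t_k) ≥ e^{k/2} φ(b)` give `Φ(t_k)ⁿ ≤ exp (-e^{k/2} / 20)`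
as soon as `b ≤ 2 n φ(b)`. This is what `b_n` is designed for:
`n φ(b_n) = √(2 log n) exp (-log (4π log n)² / (16 log n))`. The resulting series converges, and the
finitely many small `n` are absorbed into the constant.
-/

open Filter Set

lemma gaussianPDFReal_zero_one_le_of_le {x y : ℝ} (hx : 0 ≤ x) (hxy : x ≤ y) :
    gaussianPDFReal 0 1 y ≤ gaussianPDFReal 0 1 x := by
  simp only [gaussianPDFReal, NNReal.coe_one, mul_one, sub_zero]
  gcongr

lemma gaussianPDFReal_zero_one_add (t s : ℝ) :
    gaussianPDFReal 0 1 (t + s) = exp (-(t * s + s ^ 2 / 2)) * gaussianPDFReal 0 1 t := by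
  simp only [gaussianPDFReal, NNReal.coe_one, mul_one, sub_zero]
  rw [mul_left_comm, ← exp_add]
  ring_nf

/-- Integrate the density over `[t, t + 1/(1+t)]`, where it stays above `e^{-3/2} φ(t)`. -/
lemma gaussianPDFReal_div_one_add_le_gaussianReal_Ioi {t : ℝ} (ht : 0 ≤ t) :
    exp (-(3 / 2)) * gaussianPDFReal 0 1 t / (1 + t) ≤ (gaussianReal 0 1).real (Ioi t) := by
  set s := 1 / (1 + t)
  have hs : 0 ≤ s := by positivity
  have hts : t * s ≤ 1 := by rw [mul_one_div, div_le_one (by positivity)]; linarith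
  have hs1 : s ≤ 1 := by rw [div_le_one (by positivity)]; linarith
  have hdensity : exp (-(3 / 2)) * gaussianPDFReal 0 1 t ≤ gaussianPDFReal 0 1 (t + s) := by
    rw [gaussianPDFReal_zero_one_add]
    exact mul_le_mul_of_nonneg_right (exp_le_exp.2 (by nlinarith)) (gaussianPDFReal_nonneg 0 1 t)
  calc exp (-(3 / 2)) * gaussianPDFReal 0 1 t / (1 + t)
      ≤ gaussianPDFReal 0 1 (t + s) * volume.real (Ioc t (t + s)) := by
        rw [Real.volume_real_Ioc_of_le (by linarith), add_sub_cancel_left, div_eq_mul_one_div]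
        gcongr
    _ ≤ ∫ x in Ioc t (t + s), gaussianPDFReal 0 1 x :=
        setIntegral_ge_of_const_le_real measurableSet_Ioc measure_Ioc_lt_top.ne
          (fun x hx ↦ gaussianPDFReal_zero_one_le_of_le (ht.trans hx.1.le) hx.2)
          (integrable_gaussianPDFReal 0 1).integrableOn
    _ = (gaussianReal 0 1).real (Ioc t (t + s)) := by
        rw [measureReal_def, gaussianReal_apply_eq_integral 0 one_ne_zero,
          ENNReal.toReal_ofReal (setIntegral_nonneg measurableSet_Ioc
            fun x _ ↦ gaussianPDFReal_nonneg 0 1 x)]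
    _ ≤ (gaussianReal 0 1).real (Ioi t) := measureReal_mono Ioc_subset_Ioi_self

lemma measureReal_pow_le_exp_neg {Ω : Type*} [MeasurableSpace Ω] {μ : Measure Ω}
    [IsProbabilityMeasure μ] {s : Set Ω} (hs : MeasurableSet s) (n : ℕ) :
    μ.real s ^ n ≤ exp (-(n * μ.real sᶜ)) := by
  have hle : μ.real s ≤ exp (-μ.real sᶜ) := by
    rw [probReal_compl_eq_one_sub hs]
    linarith [add_one_le_exp (-(1 - μ.real s))]
  calc μ.real s ^ n ≤ exp (-μ.real sᶜ) ^ n := by gcongr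
    _ = exp (-(n * μ.real sᶜ)) := by rw [← exp_nat_mul]; ring_nf

lemma gaussianPDFReal_mul_exp_le_sub_div {b k : ℝ} (hb : 0 < b) (hk0 : 0 ≤ k) (hk : k ≤ b ^ 2) :
    gaussianPDFReal 0 1 b * exp (k / 2) ≤ gaussianPDFReal 0 1 (b - k / b) := by
  rw [sub_eq_add_neg, gaussianPDFReal_zero_one_add, mul_comm]
  refine mul_le_mul_of_nonneg_right (exp_le_exp.2 ?_) (gaussianPDFReal_nonneg 0 1 b)
  have : k ^ 2 / b ^ 2 ≤ k := by rw [div_le_iff₀ (by positivity)]; nlinarith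
  have : b * -(k / b) + (-(k / b)) ^ 2 / 2 = -k + k ^ 2 / b ^ 2 / 2 := by field_simp
  linarith

lemma bConst_eq (n : ℕ) :
    bConst n = √(2 * log n) - log (4 * π * log n) / (2 * √(2 * log n)) := by
  rw [bConst, show (8 : ℝ) * log n = 2 ^ 2 * (2 * log n) by ring,
    sqrt_mul (by norm_num : (0 : ℝ) ≤ 2 ^ 2), sqrt_sq (by norm_num : (0 : ℝ) ≤ 2)]

lemma natCast_mul_gaussianPDFReal_bConst {n : ℕ} (hn : 0 < log n) :
    n * gaussianPDFReal 0 1 (bConst n)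
      = √(2 * log n) * exp (-(log (4 * π * log n) ^ 2 / (16 * log n))) := by
  have hn0 : (0 : ℝ) < n := Nat.cast_pos.2 (Nat.pos_of_ne_zero fun h ↦ by simp [h] at hn)
  set L := log n with hL
  set u := √(2 * L) with hu
  set M := log (4 * π * L) with hM
  have hu2 : u ^ 2 = 2 * L := sq_sqrt (by positivity)
  have hu0 : 0 < u := sqrt_pos.2 (by positivity)
  clear_value L u M
  have hb : bConst n ^ 2 = 2 * L - M + M ^ 2 / (8 * L) := by
    rw [bConst_eq, ← hL, ← hu, ← hM]
    field_simp
    rw [hu2]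
    ring
  have hexpL : exp (-L) = (n : ℝ)⁻¹ := by rw [exp_neg, hL, exp_log hn0]
  have hexpM : exp (M / 2) = √(2 * π) * u := by
    rw [exp_half, hM, exp_log (by positivity), hu, ← sqrt_mul (by positivity)]
    ring_nf
  simp only [gaussianPDFReal, NNReal.coe_one, mul_one, sub_zero]
  rw [hb, show -(2 * L - M + M ^ 2 / (8 * L)) / 2 = -L + M / 2 + -(M ^ 2 / (16 * L)) by ring,
    exp_add, exp_add, hexpL, hexpM]
  field_simp

lemma log_four_pi_le_three : log (4 * π) ≤ 3 := by
  rw [log_le_iff_le_exp (by positivity)]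
  calc 4 * π ≤ 2.7182818283 ^ 3 := by nlinarith [pi_lt_d2]
    _ ≤ exp 1 ^ 3 := by gcongr; exact exp_one_gt_d9.le
    _ = exp 3 := by rw [← exp_nat_mul]; norm_num

lemma exp_three_halves_le_five : exp (3 / 2) ≤ 5 := by
  have h3 : exp (3 / 2) ^ 2 ≤ 5 ^ 2 := by
    calc exp (3 / 2) ^ 2 = exp 1 ^ 3 := by rw [← exp_nat_mul, ← exp_nat_mul]; norm_num
      _ ≤ 2.7182818286 ^ 3 := by gcongr; exact exp_one_lt_d9.le
      _ ≤ 5 ^ 2 := by norm_num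
  exact (pow_le_pow_iff_left₀ (exp_pos _).le (by norm_num) two_ne_zero).1 h3

lemma log_four_pi_mul_le {L : ℝ} (hL : 1 ≤ L) : log (4 * π * L) ≤ 3 * √L := by
  have hs : 1 ≤ √L := one_le_sqrt.2 hL
  have hlogL : log L ≤ 2 * (√L - 1) := by
    linarith [log_sqrt (by linarith : 0 ≤ L), log_le_sub_one_of_pos (by linarith : 0 < √L)]
  rw [log_mul (by positivity) (by positivity)]
  linarith [log_four_pi_le_three]

lemma one_le_bConst {n : ℕ} (hn : 9 ≤ log n) : 1 ≤ bConst n := by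
  have hs : 3 ≤ √(log n) := (le_sqrt' (by norm_num)).2 (by linarith)
  have hs2 : √(log n) ^ 2 = log n := sq_sqrt (by linarith)
  have hu2 : √(2 * log n) ^ 2 = 2 * log n := sq_sqrt (by linarith)
  have hu0 : 0 < √(2 * log n) := sqrt_pos.2 (by linarith)
  have hu : √(2 * log n) ≤ 3 / 2 * √(log n) := by
    rw [sqrt_mul zero_le_two]
    nlinarith [sqrt_two_lt_three_halves, sqrt_nonneg (log n)]
  have hM := log_four_pi_mul_le (L := log n) (by linarith)
  rw [bConst_eq]
  have : log (4 * π * log n) / (2 * √(2 * log n)) ≤ √(2 * log n) - 1 := by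
    rw [div_le_iff₀ (by positivity)]
    nlinarith
  linarith

lemma bConst_le_two_mul_natCast_mul_gaussianPDFReal {n : ℕ} (hn : 9 ≤ log n) :
    bConst n ≤ 2 * (n * gaussianPDFReal 0 1 (bConst n)) := by
  rw [natCast_mul_gaussianPDFReal_bConst (by linarith)]
  have hM0 : 0 ≤ log (4 * π * log n) := log_nonneg (by nlinarith [pi_gt_three])
  have hM := log_four_pi_mul_le (L := log n) (by linarith)
  have hMsq : log (4 * π * log n) ^ 2 / (16 * log n) ≤ log 2 := by
    rw [div_le_iff₀ (by positivity)]
    have : log (4 * π * log n) ^ 2 ≤ 9 * log n := by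
      nlinarith [sq_sqrt (by linarith : 0 ≤ log n)]
    nlinarith [log_two_gt_d9]
  have hhalf : 1 / 2 ≤ exp (-(log (4 * π * log n) ^ 2 / (16 * log n))) := by
    calc (1 : ℝ) / 2 = exp (-log 2) := by rw [exp_neg, exp_log two_pos, one_div]
      _ ≤ _ := exp_le_exp.2 (by linarith)
  have hb : bConst n ≤ √(2 * log n) := by
    rw [bConst_eq]
    linarith [div_nonneg hM0 (by positivity : 0 ≤ 2 * √(2 * log n))]
  nlinarith [sqrt_nonneg (2 * log n)]

lemma exp_div_twenty_le_natCast_mul_gaussianReal_Ioi {n : ℕ} (hn : 9 ≤ log n) {k : ℝ}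
    (hk0 : 0 ≤ k) (hk : k ≤ bConst n ^ 2) :
    exp (k / 2) / 20 ≤ n * (gaussianReal 0 1).real (Ioi (bConst n - k / bConst n)) := by
  set b := bConst n
  have hb1 : 1 ≤ b := one_le_bConst hn
  have hkb : k / b ≤ b := by rw [div_le_iff₀ (by positivity)]; nlinarith
  have hkb0 : 0 ≤ k / b := by positivity
  have hφb : 1 / 4 ≤ n * gaussianPDFReal 0 1 b / (2 * b) := by
    rw [le_div_iff₀ (by positivity)]
    linarith [bConst_le_two_mul_natCast_mul_gaussianPDFReal hn]
  have hexp : 1 / 5 ≤ exp (-(3 / 2)) := by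
    rw [exp_neg, one_div]; exact inv_anti₀ (exp_pos _) exp_three_halves_le_five
  calc exp (k / 2) / 20 = exp (k / 2) * (1 / 5) * (1 / 4) := by ring
    _ ≤ exp (k / 2) * exp (-(3 / 2)) * (n * gaussianPDFReal 0 1 b / (2 * b)) := by gcongr
    _ = n * (exp (-(3 / 2)) * (gaussianPDFReal 0 1 b * exp (k / 2)) / (2 * b)) := by ring
    _ ≤ n * (exp (-(3 / 2)) * gaussianPDFReal 0 1 (b - k / b) / (1 + (b - k / b))) := by
        refine mul_le_mul_of_nonneg_left (div_le_div₀ ?_ ?_ (by linarith) (by linarith))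
          (Nat.cast_nonneg n)
        · exact mul_nonneg (exp_pos _).le (gaussianPDFReal_nonneg 0 1 _)
        · exact mul_le_mul_of_nonneg_left
            (gaussianPDFReal_mul_exp_le_sub_div (by positivity) hk0 hk) (exp_pos _).le
    _ ≤ n * (gaussianReal 0 1).real (Ioi (b - k / b)) := by
        gcongr
        exact gaussianPDFReal_div_one_add_le_gaussianReal_Ioi (by linarith)

lemma exp_neg_mul_sq_le_sum_indicator {θ b : ℝ} (hθ : 0 ≤ θ) (hb : 0 < b) (x : ℝ) :
    exp (-θ * max x 0 ^ 2) ≤ exp (-θ * b ^ 2) * (1 + ∑ k ∈ Finset.range (⌊b ^ 2⌋₊ + 1),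
      exp (2 * θ * (k + 1)) * (Iic (b - k / b)).indicator 1 x) := by
  set s := max x 0
  have hs0 : 0 ≤ s := le_max_right _ _
  have hterm : ∀ k ∈ Finset.range (⌊b ^ 2⌋₊ + 1),
      0 ≤ exp (2 * θ * (k + 1)) * (Iic (b - k / b)).indicator 1 x :=
    fun k _ ↦ mul_nonneg (exp_pos _).le (indicator_nonneg (fun _ _ ↦ zero_le_one) _)
  rcases le_or_gt b s with hbs | hsb
  · calc exp (-θ * s ^ 2) ≤ exp (-θ * b ^ 2) :=
          exp_le_exp.2 (by nlinarith [pow_le_pow_left₀ hb.le hbs 2])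
      _ ≤ _ := le_mul_of_one_le_right (exp_pos _).le
          (le_add_of_nonneg_right (Finset.sum_nonneg hterm))
  -- With `k = ⌊b (b - s)⌋`: `x ≤ s ≤ b - k / b` and `s² ≥ b² - 2b(b - s) > b² - 2(k + 1)`.
  set k := ⌊b * (b - s)⌋₊
  have hk : (k : ℝ) ≤ b * (b - s) := Nat.floor_le (by nlinarith)
  have hk1 : b * (b - s) < k + 1 := Nat.lt_floor_add_one _
  have hkK : k ∈ Finset.range (⌊b ^ 2⌋₊ + 1) :=
    Finset.mem_range.2 (Nat.lt_succ_of_le (Nat.floor_le_floor (by nlinarith)))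
  have hxk : x ∈ Iic (b - k / b) := by
    have : (k : ℝ) / b ≤ b - s := by rw [div_le_iff₀ hb]; linarith
    exact (le_max_left x 0).trans (by linarith)
  calc exp (-θ * s ^ 2) ≤ exp (-θ * b ^ 2) * exp (2 * θ * (k + 1)) := by
        rw [← exp_add]; exact exp_le_exp.2 (by nlinarith [sq_nonneg (b - s)])
    _ = exp (-θ * b ^ 2) * (exp (2 * θ * (k + 1)) * (Iic (b - k / b)).indicator 1 x) := by
        rw [indicator_of_mem hxk, Pi.one_apply, mul_one]
    _ ≤ _ := by
        gcongr
        exact (Finset.single_le_sum hterm hkK).trans (le_add_of_nonneg_left zero_le_one)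

lemma integral_exp_neg_mul_sq_le_sum {μ : Measure ℝ} [IsProbabilityMeasure μ] {θ b : ℝ}
    (hθ : 0 ≤ θ) (hb : 0 < b) :
    ∫ x, exp (-θ * max x 0 ^ 2) ∂μ ≤ exp (-θ * b ^ 2) * (1 + ∑ k ∈ Finset.range (⌊b ^ 2⌋₊ + 1),
      exp (2 * θ * (k + 1)) * μ.real (Iic (b - k / b))) := by
  have hint : ∀ k : ℕ, Integrable
      (fun x ↦ exp (2 * θ * (k + 1)) * (Iic (b - k / b)).indicator 1 x) μ :=
    fun k ↦ ((integrable_const 1).indicator measurableSet_Iic).const_mul _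
  have hsum := integrable_finsetSum (Finset.range (⌊b ^ 2⌋₊ + 1)) fun k _ ↦ hint k
  calc ∫ x, exp (-θ * max x 0 ^ 2) ∂μ
      ≤ ∫ x, exp (-θ * b ^ 2) * (1 + ∑ k ∈ Finset.range (⌊b ^ 2⌋₊ + 1),
          exp (2 * θ * (k + 1)) * (Iic (b - k / b)).indicator 1 x) ∂μ :=
        integral_mono_of_nonneg (ae_of_all _ fun _ ↦ (exp_pos _).le)
          (((integrable_const 1).add hsum).const_mul _)
          (ae_of_all _ (exp_neg_mul_sq_le_sum_indicator hθ hb))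
    _ = _ := by
        rw [integral_const_mul, integral_add (integrable_const 1) hsum,
          integral_finsetSum _ fun k _ ↦ hint k]
        simp [integral_const_mul, integral_indicator_one measurableSet_Iic]

lemma summable_exp_mul_exp_neg_exp (θ : ℝ) :
    Summable fun k : ℕ ↦ exp (2 * θ * (k + 1)) * exp (-(exp (k / 2) / 20)) := by
  refine Summable.of_nonneg_of_le (fun k ↦ by positivity) (fun k ↦ ?_)
    (summable_exp_neg_nat.mul_left (exp (2 * θ + 80 * (2 * θ + 1) ^ 2)))
  have hk : (k : ℝ) ^ 2 / 16 ≤ exp (k / 2) := by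
    have h := add_one_le_exp ((k : ℝ) / 4)
    have h2 : exp ((k : ℝ) / 4) ^ 2 = exp (k / 2) := by rw [← exp_nat_mul]; ring_nf
    nlinarith [Nat.cast_nonneg (α := ℝ) k, exp_pos ((k : ℝ) / 4)]
  rw [← exp_add, ← exp_add]
  exact exp_le_exp.2 (by nlinarith [sq_nonneg ((k : ℝ) / 160 - (2 * θ + 1))])

noncomputable def maxMomentConst (θ : ℝ) : ℝ :=
  1 + ∑' k : ℕ, exp (2 * θ * (k + 1)) * exp (-(exp (k / 2) / 20))

theorem integral_exp_neg_mul_sq_le_of_le_gaussianReal_Iic_pow {μ : Measure ℝ}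
    [IsProbabilityMeasure μ] {θ : ℝ} (hθ : 0 ≤ θ) {n : ℕ} (hn : 9 ≤ log n)
    (hμ : ∀ t, 0 ≤ t → μ.real (Iic t) ≤ (gaussianReal 0 1).real (Iic t) ^ n) :
    ∫ x, exp (-θ * max x 0 ^ 2) ∂μ ≤ maxMomentConst θ * exp (-θ * bConst n ^ 2) := by
  have hb := one_le_bConst hn
  refine (integral_exp_neg_mul_sq_le_sum hθ (by linarith)).trans ?_
  rw [maxMomentConst, mul_comm]
  gcongr
  refine (Finset.sum_le_sum fun k hk ↦ ?_).trans
    ((summable_exp_mul_exp_neg_exp θ).sum_le_tsum _ fun k _ ↦ by positivity)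
  have hkb : (k : ℝ) ≤ bConst n ^ 2 :=
    (Nat.cast_le.2 (Nat.lt_succ_iff.1 (Finset.mem_range.1 hk))).trans (Nat.floor_le (sq_nonneg _))
  have ht : 0 ≤ bConst n - k / bConst n := by
    rw [sub_nonneg, div_le_iff₀ (by linarith)]; nlinarith
  gcongr
  calc μ.real (Iic (bConst n - k / bConst n))
      ≤ (gaussianReal 0 1).real (Iic (bConst n - k / bConst n)) ^ n := hμ _ ht
    _ ≤ exp (-(n * (gaussianReal 0 1).real (Ioi (bConst n - k / bConst n)))) := by
        simpa only [compl_Iic] using measureReal_pow_le_exp_neg (μ := gaussianReal 0 1)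
          (measurableSet_Iic (a := bConst n - k / bConst n)) n
    _ ≤ exp (-(exp (k / 2) / 20)) :=
        exp_le_exp.2 (neg_le_neg
          (exp_div_twenty_le_natCast_mul_gaussianReal_Ioi hn (Nat.cast_nonneg k) hkb))

theorem integral_exp_neg_mul_sq_max_le_of_le_gaussianReal_Iic_pow {Ω : Type*}
    [MeasurableSpace Ω] {P : Measure Ω} [IsProbabilityMeasure P] {X : Ω → ℝ}
    (hX : AEMeasurable X P) {θ : ℝ} (hθ : 0 ≤ θ) {n : ℕ} (hn : 9 ≤ log n)
    (hcdf : ∀ t, 0 ≤ t → P.real {ω | X ω ≤ t} ≤ (gaussianReal 0 1).real (Iic t) ^ n) :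
    ∫ ω, exp (-θ * max (X ω) 0 ^ 2) ∂P ≤ maxMomentConst θ * exp (-θ * bConst n ^ 2) := by
  have := Measure.isProbabilityMeasure_map hX
  have hcont : Continuous fun x : ℝ ↦ exp (-θ * max x 0 ^ 2) := by fun_prop
  refine (integral_map hX hcont.aestronglyMeasurable).symm.trans_le
    (integral_exp_neg_mul_sq_le_of_le_gaussianReal_Iic_pow hθ hn fun t ht ↦ ?_)
  rw [map_measureReal_apply_of_aemeasurable hX measurableSet_Iic]
  exact hcdf t ht

lemma measureReal_iSup_le_eq_pow {Ω ι : Type*} [MeasurableSpace Ω] [Fintype ι] [Nonempty ι]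
    {P : Measure Ω} {X : ι → Ω → ℝ} (hind : iIndepFun X P) (hX : ∀ i, AEMeasurable (X i) P)
    {μ : Measure ℝ} (hlaw : ∀ i, P.map (X i) = μ) (t : ℝ) :
    P.real {ω | ⨆ i, X i ω ≤ t} = μ.real (Iic t) ^ Fintype.card ι := by
  have hset : {ω | ⨆ i, X i ω ≤ t} = ⋂ i, X i ⁻¹' Iic t := by
    ext ω; simp [ciSup_le_iff (Set.finite_range fun i ↦ X i ω).bddAbove]
  rw [hset, measureReal_def, hind.meas_iInter fun i ↦ ⟨Iic t, measurableSet_Iic, rfl⟩,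
    ENNReal.toReal_prod]
  simp_rw [← measureReal_def, ← map_measureReal_apply_of_aemeasurable (hX _) measurableSet_Iic,
    hlaw, Finset.prod_const, Finset.card_univ]

lemma exists_pos_forall_le_mul_of_eventually_le {f g : ℕ → ℝ} {C : ℝ} (hf : ∀ n, 0 ≤ f n)
    (hg : ∀ n, 0 < g n) (h : ∀ᶠ n in atTop, f n ≤ C * g n) : ∃ γ > 0, ∀ n, f n ≤ γ * g n := by
  have hO : f =O[atTop] g := .of_bound C <| h.mono fun n hn ↦ by
    rwa [norm_of_nonneg (hf n), norm_of_nonneg (hg n).le]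
  obtain ⟨γ, hγ, hbound⟩ := Asymptotics.bound_of_isBigO_nat_atTop hO
  refine ⟨γ, hγ, fun n ↦ ?_⟩
  simpa [norm_of_nonneg (hf n), norm_of_nonneg (hg n).le] using hbound (hg n).ne'

/-- For `V_n` the maximum of `n` i.i.d. standard Gaussians and every `θ > 0`
there is `γ(θ) > 0` with `E[exp(−θ max{V_n,0}²)] ≤ γ(θ) exp(−θ b_n²)` for all
`n ≥ 1`. -/
theorem exp_moment_max_gaussian
    {Ω : Type*} [MeasurableSpace Ω] (P : Measure Ω) [IsProbabilityMeasure P]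
    (Z : ℕ → Ω → ℝ)
    (hind : iIndepFun Z P)
    (hZ : ∀ i, Measure.map (Z i) P = gaussianReal 0 1)
    (θ : ℝ) (hθ : 0 < θ) :
    ∃ γ : ℝ, 0 < γ ∧ ∀ n : ℕ, 1 ≤ n →
      ∫ ω, Real.exp (-θ * max (⨆ i : Fin n, Z i ω) 0 ^ 2) ∂P
        ≤ γ * Real.exp (-θ * bConst n ^ 2) := by
  have hZm : ∀ i, AEMeasurable (Z i) P :=
    fun i ↦ .of_map_ne_zero (by rw [hZ i]; exact NeZero.ne _)
  have hlarge : ∀ᶠ n : ℕ in atTop, ∫ ω, exp (-θ * max (⨆ i : Fin n, Z i ω) 0 ^ 2) ∂P ≤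
      maxMomentConst θ * exp (-θ * bConst n ^ 2) := by
    filter_upwards [(tendsto_log_atTop.comp tendsto_natCast_atTop_atTop).eventually_ge_atTop 9,
      eventually_gt_atTop 0] with n hn hn0
    have : Nonempty (Fin n) := ⟨⟨0, hn0⟩⟩
    refine integral_exp_neg_mul_sq_max_le_of_le_gaussianReal_Iic_pow (.iSup fun i : Fin n ↦ hZm i)
      hθ.le hn fun t _ ↦ ?_
    have hcdf := measureReal_iSup_le_eq_pow (hind.precomp (Fin.val_injective (n := n)))
      (fun i ↦ hZm i) (fun i ↦ hZ i) t
    rw [Fintype.card_fin] at hcdf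
    exact hcdf.le
  obtain ⟨γ, hγ, hbound⟩ := exists_pos_forall_le_mul_of_eventually_le
    (fun n ↦ integral_nonneg fun _ ↦ (exp_pos _).le) (fun n ↦ exp_pos _) hlarge
  exact ⟨γ, hγ, fun n _ ↦ hbound n⟩
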